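/- Let q ≥ 5 be an odd integer and n ≥ 1. Let C ⊆ (ZMod q)ⁿ be a set such that for every two distinct x, y ∈ C there exists a coordinate k with x_k − y_k ∉ {0, 1, −1} in ZMod q (i.e., C is a zero-error code for the typewriter channel, equivalently an independent set in the n-fold strong product of the q-cycle). Then |C| ≤ ( q cos(π/q) / (1 + cos(π/q)) )ⁿ. -/
import Mathlib

open Finset Complex AddChar

namespace Stmt12Aux

variable {q : ℕ} [NeZero q]

lemma sum_char (t : ZMod q) :
    ∑ j : ZMod q, ZMod.stdAddChar (t * j) = if t = 0 then (q : ℂ) else 0 := by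
  split_ifs with h
  · simp only [h, zero_mul, map_zero_eq_one, sum_const, card_univ, ZMod.card,
      nsmul_eq_mul, mul_one]
  · exact sum_eq_zero_of_ne_one (ZMod.isPrimitive_stdAddChar q h)

lemma char_re (j : ZMod q) :
    ZMod.stdAddChar j + ZMod.stdAddChar (-j) = (Real.cos (2 * Real.pi * j.val / q) : ℂ) * 2 := by
  have h : (ZMod.stdAddChar j : ℂ) = Complex.exp ((2 * Real.pi * j.val / q : ℝ) * I) := by
    rw [ZMod.stdAddChar_apply, ZMod.toCircle_apply]
    push_cast; ring_nf
  have h2 : (ZMod.stdAddChar (-j) : ℂ) = Complex.exp ((-(2 * Real.pi * j.val / q) : ℝ) * I) := by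
    rw [map_neg_eq_inv, h, ← Complex.exp_neg]
    push_cast; ring_nf
  rw [h, h2, Complex.exp_mul_I, Complex.exp_mul_I, Complex.ofReal_neg, Complex.cos_neg,
    Complex.sin_neg, Complex.ofReal_cos]
  ring

lemma star_char (a : ZMod q) :
    (starRingEnd ℂ) (ZMod.stdAddChar a) = ZMod.stdAddChar (-a) := by
  rw [ZMod.stdAddChar_apply, ZMod.stdAddChar_apply, ← Circle.coe_inv_eq_conj,
    ← AddChar.map_neg_eq_inv]

lemma cos_key (hq5 : 5 ≤ q) (hqo : Odd q) (j : ZMod q) :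
    -Real.cos (Real.pi / q) ≤ Real.cos (2 * Real.pi * j.val / q) := by
  have hqpos : (0:ℝ) < q := by
    have : 0 < q := by omega
    exact_mod_cast this
  set v := j.val with hv
  have hvq : v < q := ZMod.val_lt j
  have habs1 : (1:ℝ) ≤ |(q:ℝ) - 2*v| := by
    obtain ⟨k, hk⟩ := hqo
    have h1 : (1:ℤ) ≤ |(q:ℤ) - 2*(v:ℤ)| := Int.one_le_abs (by omega)
    calc (1:ℝ) = ((1:ℤ):ℝ) := by norm_num
    _ ≤ ((|(q:ℤ) - 2*(v:ℤ)| : ℤ) : ℝ) := by exact_mod_cast h1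
    _ = |(q:ℝ) - 2*v| := by push_cast [Int.cast_abs]; ring_nf
  have heq : Real.pi - 2*Real.pi*v/q = Real.pi * ((q:ℝ) - 2*v) / q := by
    field_simp
  have h1 : Real.pi / q ≤ |Real.pi - 2*Real.pi*v/q| := by
    rw [heq, abs_div, abs_mul, abs_of_pos Real.pi_pos, abs_of_pos hqpos]
    rw [div_le_div_iff₀ hqpos hqpos]
    have := mul_le_mul_of_nonneg_right (mul_le_mul_of_nonneg_left habs1 Real.pi_pos.le) hqpos.le
    linarith
  have h2 : |Real.pi - 2*Real.pi*v/q| ≤ Real.pi := by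
    rw [abs_le]
    constructor
    · rw [neg_le, neg_sub, sub_le_iff_le_add]
      have : 2*Real.pi*v/q ≤ 2*Real.pi := by
        rw [div_le_iff₀ hqpos]
        nlinarith [Real.pi_pos, (by exact_mod_cast hvq.le : (v:ℝ) ≤ q)]
      linarith
    · have : 0 ≤ 2*Real.pi*v/q := by positivity
      linarith
  have h3 := Real.cos_le_cos_of_nonneg_of_le_pi (by positivity) h2 h1
  rw [Real.cos_abs, Real.cos_pi_sub] at h3
  linarith

/-- The weight function: Fourier coefficients of the Lovász witness. -/
noncomputable def c (q : ℕ) [NeZero q] (j : ZMod q) : ℝ :=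
  1 + (Real.cos (Real.pi / q))⁻¹ * Real.cos (2 * Real.pi * j.val / q)

lemma c_nonneg (hq5 : 5 ≤ q) (hqo : Odd q) (hK : 0 < Real.cos (Real.pi / q)) (j : ZMod q) :
    0 ≤ c q j := by
  have h := cos_key hq5 hqo j
  have h2 : (Real.cos (Real.pi / q))⁻¹ * (-Real.cos (Real.pi / q))
      ≤ (Real.cos (Real.pi / q))⁻¹ * Real.cos (2 * Real.pi * j.val / q) :=
    mul_le_mul_of_nonneg_left h (by positivity)
  rw [mul_neg, inv_mul_cancel₀ hK.ne'] at h2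
  unfold c
  linarith

lemma c_zero : c q 0 = 1 + (Real.cos (Real.pi / q))⁻¹ := by
  unfold c
  simp [ZMod.val_zero]

/-- The positive definite function supported on `{0, 1, -1}`. -/
noncomputable def G (q : ℕ) [NeZero q] (s : ZMod q) : ℂ :=
  (q : ℂ)⁻¹ * ∑ j : ZMod q, ((c q j : ℝ) : ℂ) * ZMod.stdAddChar (j * s)

lemma G_eq (hK : 0 < Real.cos (Real.pi / q)) (s : ZMod q) :
    G q s = (if s = 0 then 1 else 0)
      + ((2 * Real.cos (Real.pi / q) : ℝ) : ℂ)⁻¹ *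
        ((if s = -1 then 1 else 0) + (if s = 1 then 1 else 0)) := by
  have hqC : (q : ℂ) ≠ 0 := Nat.cast_ne_zero.mpr (NeZero.ne q)
  have hKC : ((Real.cos (Real.pi / q) : ℝ) : ℂ) ≠ 0 := by
    exact_mod_cast Complex.ofReal_ne_zero.mpr hK.ne'
  have hterm : ∀ j : ZMod q, ((c q j : ℝ) : ℂ) * ZMod.stdAddChar (j * s)
      = ZMod.stdAddChar (s * j)
        + ((2 * Real.cos (Real.pi / q) : ℝ) : ℂ)⁻¹ *
          (ZMod.stdAddChar ((s + 1) * j) + ZMod.stdAddChar ((s - 1) * j)) := by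
    intro j
    have h1 := char_re (q := q) j
    have hmul1 : ZMod.stdAddChar ((s + 1) * j) = ZMod.stdAddChar j * ZMod.stdAddChar (j * s) := by
      rw [← AddChar.map_add_eq_mul]; ring_nf
    have hmul2 : ZMod.stdAddChar ((s - 1) * j)
        = ZMod.stdAddChar (-j) * ZMod.stdAddChar (j * s) := by
      rw [← AddChar.map_add_eq_mul]; ring_nf
    have hmul0 : ZMod.stdAddChar (s * j) = ZMod.stdAddChar (j * s) := by rw [mul_comm]
    rw [hmul0, hmul1, hmul2]
    unfold c
    simp only [Complex.ofReal_add, Complex.ofReal_mul, Complex.ofReal_inv, Complex.ofReal_one,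
      Complex.ofReal_ofNat]
    rw [show ((Real.cos (2 * Real.pi * j.val / q) : ℝ) : ℂ)
        = (ZMod.stdAddChar j + ZMod.stdAddChar (-j)) / 2 by rw [h1]; ring]
    field_simp
  rw [G]
  rw [Finset.sum_congr rfl (fun j _ => hterm j)]
  rw [Finset.sum_add_distrib, ← Finset.mul_sum, Finset.sum_add_distrib]
  rw [sum_char, sum_char, sum_char]
  have e1 : (s + 1 = 0) ↔ (s = -1) := by
    constructor <;> intro h <;> linear_combination h
  have e2 : (s - 1 = 0) ↔ (s = 1) := by
    constructor <;> intro h <;> linear_combination h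
  simp only [e1, e2]
  split_ifs <;> field_simp <;>
    first
    | ring1
    | rw [mul_inv_cancel₀ hqC, one_mul]
    | (ring_nf; rw [mul_inv_cancel₀ hqC, one_mul])

lemma G_zero (hq5 : 5 ≤ q) (hK : 0 < Real.cos (Real.pi / q)) : G q 0 = 1 := by
  haveI : Fact (1 < q) := ⟨by omega⟩
  rw [G_eq hK]
  have h1 : (0 : ZMod q) ≠ -1 := by
    intro h
    have : (1 : ZMod q) = 0 := by linear_combination h
    exact one_ne_zero this
  have h2 : (0 : ZMod q) ≠ 1 := by
    intro h; exact one_ne_zero h.symm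
  simp [h1, h2]

lemma G_vanish (hK : 0 < Real.cos (Real.pi / q)) {s : ZMod q}
    (h0 : s ≠ 0) (h1 : s ≠ 1) (h2 : s ≠ -1) : G q s = 0 := by
  rw [G_eq hK]
  simp [h0, h1, h2]

/-- The exponential sum of the code at frequency `J`. -/
noncomputable def S {q n : ℕ} [NeZero q] (C : Finset (Fin n → ZMod q))
    (J : Fin n → ZMod q) : ℂ :=
  ∑ x ∈ C, ∏ k, ZMod.stdAddChar (J k * x k)

lemma hGdef {n : ℕ} (x y : Fin n → ZMod q) : (∏ k, G q (x k - y k))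
    = ((q:ℂ)⁻¹)^n * ∑ J : Fin n → ZMod q,
      ∏ k, (((c q (J k) : ℝ):ℂ) * ZMod.stdAddChar (J k * (x k - y k))) := by
  have h : (∏ k, G q (x k - y k))
      = ∏ k, ((q:ℂ)⁻¹ * ∑ j : ZMod q, ((c q j : ℝ):ℂ) * ZMod.stdAddChar (j * (x k - y k))) := rfl
  rw [h, Finset.prod_mul_distrib, Finset.prod_const, Finset.card_univ, Fintype.card_fin]
  congr 1
  rw [Finset.prod_univ_sum (fun _ => (univ : Finset (ZMod q)))
    (fun k j => ((c q j : ℝ):ℂ) * ZMod.stdAddChar (j * (x k - y k))), Fintype.piFinset_univ]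

lemma key_inner {n : ℕ} (C : Finset (Fin n → ZMod q)) (J : Fin n → ZMod q) :
    ∑ x ∈ C, ∑ y ∈ C, (∏ k, (((c q (J k) : ℝ):ℂ) * ZMod.stdAddChar (J k * (x k - y k))))
    = ((∏ k, c q (J k) : ℝ) : ℂ) * ((Complex.normSq (S C J) : ℝ) : ℂ) := by
  have hsub : ∀ (j a b : ZMod q), ZMod.stdAddChar (j * (a - b))
      = ZMod.stdAddChar (j * a) * (starRingEnd ℂ) (ZMod.stdAddChar (j * b)) := by
    intro j a b
    rw [star_char, ← AddChar.map_add_eq_mul, mul_sub, sub_eq_add_neg]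
  have hxy : ∀ x y : Fin n → ZMod q,
      (∏ k, (((c q (J k) : ℝ):ℂ) * ZMod.stdAddChar (J k * (x k - y k))))
      = ((∏ k, c q (J k) : ℝ) : ℂ) *
        ((∏ k, ZMod.stdAddChar (J k * x k)) *
          (starRingEnd ℂ) (∏ k, ZMod.stdAddChar (J k * y k))) := by
    intro x y
    rw [Finset.prod_mul_distrib]
    congr 1
    · push_cast; ring
    · rw [map_prod, ← Finset.prod_mul_distrib]
      exact Finset.prod_congr rfl (fun k _ => hsub (J k) (x k) (y k))
  rw [Finset.sum_congr rfl fun x _ => Finset.sum_congr rfl fun y _ => hxy x y]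
  rw [show (S C J : ℂ) = ∑ x ∈ C, ∏ k, ZMod.stdAddChar (J k * x k) from rfl]
  simp only [← Finset.mul_sum, ← Finset.sum_mul, ← map_sum]
  rw [Complex.mul_conj]

lemma claimB {n : ℕ} (C : Finset (Fin n → ZMod q)) :
    ∑ x ∈ C, ∑ y ∈ C, ∏ k, G q (x k - y k)
    = ((∑ J : Fin n → ZMod q,
      (∏ k, c q (J k)) / (q:ℝ)^n * Complex.normSq (S C J) : ℝ) : ℂ) := by
  rw [Finset.sum_congr rfl fun x _ => Finset.sum_congr rfl fun y _ => hGdef x y]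
  simp only [← Finset.mul_sum]
  rw [Finset.sum_congr rfl fun x (_ : x ∈ C) =>
    Finset.sum_comm (s := C) (t := (univ : Finset (Fin n → ZMod q)))]
  rw [Finset.sum_comm (s := C) (t := (univ : Finset (Fin n → ZMod q)))]
  rw [Finset.sum_congr rfl fun J _ => key_inner C J]
  push_cast
  rw [Finset.mul_sum]
  exact Finset.sum_congr rfl fun J _ => by ring

end Stmt12Aux

open Stmt12Aux in
/- Statement 12: Lovász bound for zero-error codes of the typewriter channel with odd
`q`: an independent set `C` of the `n`-fold strong product of the `q`-cycle has
`|C| ≤ (q cos(π/q)/(1+cos(π/q)))ⁿ`. -/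
theorem stmt12 (q n : ℕ) [NeZero q] (hq : 5 ≤ q) (hqo : Odd q) (hn : 1 ≤ n)
    (C : Finset (Fin n → ZMod q))
    (hC : ∀ x ∈ C, ∀ y ∈ C, x ≠ y →
      ∃ k, x k - y k ≠ 0 ∧ x k - y k ≠ 1 ∧ x k - y k ≠ -1) :
    (C.card : ℝ) ≤ ((q : ℝ) * Real.cos (Real.pi / q) / (1 + Real.cos (Real.pi / q))) ^ n := by
  have hqR : (0:ℝ) < q := by exact_mod_cast (by omega : 0 < q)
  have hK : 0 < Real.cos (Real.pi / q) := by
    apply Real.cos_pos_of_mem_Ioo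
    constructor
    · have h1 : 0 < Real.pi / q := by positivity
      have := Real.pi_pos
      linarith
    · rw [div_lt_div_iff₀ hqR two_pos]
      have h5 : (5:ℝ) ≤ q := by exact_mod_cast hq
      nlinarith [Real.pi_pos]
  -- Claim A : the quadratic form equals |C|
  have claimA : ∑ x ∈ C, ∑ y ∈ C, ∏ k, G q (x k - y k) = (C.card : ℂ) := by
    have hpt : ∀ x ∈ C, ∀ y ∈ C, (∏ k, G q (x k - y k)) = if x = y then 1 else 0 := by
      intro x hx y hy
      by_cases hxy : x = y
      · subst hxy
        simp [G_zero hq hK]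
      · obtain ⟨k, h0, h1, h2⟩ := hC x hx y hy hxy
        rw [if_neg hxy]
        exact Finset.prod_eq_zero (Finset.mem_univ k) (G_vanish hK h0 h1 h2)
    rw [Finset.sum_congr rfl (fun x hx => Finset.sum_congr rfl (fun y hy => hpt x hx y hy))]
    have h2 : ∀ x ∈ C, (∑ y ∈ C, if x = y then (1:ℂ) else 0) = 1 := by
      intro x hx
      rw [Finset.sum_ite_eq C x (fun _ => (1:ℂ)), if_pos hx]
    rw [Finset.sum_congr rfl h2]
    simp
  -- pass to the reals
  have hreal : (C.card : ℝ) = ∑ J : Fin n → ZMod q,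
      (∏ k, c q (J k)) / (q:ℝ)^n * Complex.normSq (S C J) := by
    have h := claimA.symm.trans (claimB C)
    exact_mod_cast h
  -- the zero-frequency term
  have hS0 : S C (fun _ => (0:ZMod q)) = (C.card : ℂ) := by
    rw [show S C (fun _ => (0:ZMod q))
      = ∑ x ∈ C, ∏ k : Fin n, ZMod.stdAddChar ((0:ZMod q) * x k) from rfl]
    simp
  have hterm0 : (∏ k : Fin n, c q ((fun _ => (0:ZMod q)) k)) / (q:ℝ)^n
      * Complex.normSq (S C (fun _ => (0:ZMod q)))
      = (1 + (Real.cos (Real.pi / q))⁻¹)^n / (q:ℝ)^n * (C.card:ℝ)^2 := by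
    rw [hS0]
    simp only [c_zero, Finset.prod_const, Finset.card_univ, Fintype.card_fin]
    rw [Complex.normSq_natCast]
    push_cast
    ring
  have hge : (1 + (Real.cos (Real.pi / q))⁻¹)^n / (q:ℝ)^n * (C.card:ℝ)^2 ≤ (C.card : ℝ) := by
    rw [← hterm0]
    conv_rhs => rw [hreal]
    apply Finset.single_le_sum (f := fun J : Fin n → ZMod q =>
      (∏ k, c q (J k)) / (q:ℝ)^n * Complex.normSq (S C J))
    · intro J _
      apply mul_nonneg
      · apply div_nonneg
        · exact Finset.prod_nonneg fun k _ => c_nonneg hq hqo hK (J k)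
        · positivity
      · exact Complex.normSq_nonneg _
    · exact Finset.mem_univ _
  -- conclude
  have hco : (1 + (Real.cos (Real.pi / q))⁻¹)^n / (q:ℝ)^n
      = (((q:ℝ) * Real.cos (Real.pi / q) / (1 + Real.cos (Real.pi / q)))^n)⁻¹ := by
    rw [← div_pow, ← inv_pow]
    congr 1
    field_simp
    ring
  by_cases hcard : C.card = 0
  · rw [hcard]
    push_cast
    positivity
  · have hcard1 : (1:ℝ) ≤ C.card := by exact_mod_cast Nat.one_le_iff_ne_zero.mpr hcard
    rw [hco] at hge
    have hθn : 0 < ((q:ℝ) * Real.cos (Real.pi / q) / (1 + Real.cos (Real.pi / q)))^n := by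
      positivity
    have h2 := mul_le_mul_of_nonneg_right hge hθn.le
    rw [mul_comm ((((q:ℝ) * Real.cos (Real.pi / q) / (1 + Real.cos (Real.pi / q)))^n)⁻¹)
      ((C.card:ℝ)^2), mul_assoc, inv_mul_cancel₀ hθn.ne', mul_one] at h2
    nlinarith [h2, hcard1]
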